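/- arXiv:1508.07032 — 6 statements merged into one kernel-verified Lean document; each statement's English description precedes it below -/
import Mathlib

section
/- The map w ↦ (w + w⁻¹)/2 is a bijection from the punctured open unit disc {w ∈ ℂ : 0 < |w| < 1} onto ℂ \ [−1,1], where [−1,1] denotes the real segment {x + 0i : −1 ≤ x ≤ 1} inside ℂ. -/
/-! Writing `J w = (w + w⁻¹)/2`, the identity `2 (J w - J v) = (w - v)(1 - (w v)⁻¹)` shows that
`J w = J v` forces `v = w` or `v = w⁻¹`, which gives injectivity on the disc. Since
`J (exp (θ i)) = cos θ`, every point of `[-1,1]` is the image of a point of the unit circle, so its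
only preimages lie on the circle; conversely `J w = Re w` on the circle. Every `z` is `J w` for a
root `w` of `w² - 2 z w + 1`, and `w` or `w⁻¹` lies in the punctured disc unless `|w| = 1`. -/

open Complex

noncomputable def joukowsky (w : ℂ) : ℂ := (w + w⁻¹) / 2

theorem joukowsky_inv (w : ℂ) : joukowsky w⁻¹ = joukowsky w := by
  rw [joukowsky, joukowsky, inv_inv, add_comm]

theorem eq_or_mul_eq_one_of_joukowsky_eq {w v : ℂ} (hw : w ≠ 0) (hv : v ≠ 0)
    (h : joukowsky w = joukowsky v) : w = v ∨ w * v = 1 := by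
  have key : (w - v) * (w * v - 1) = 0 := by
    unfold joukowsky at h
    field_simp at h
    linear_combination h
  rcases mul_eq_zero.1 key with h | h
  exacts [.inl (sub_eq_zero.1 h), .inr (sub_eq_zero.1 h)]

theorem norm_eq_one_of_joukowsky_eq {w u : ℂ} (hw : w ≠ 0) (hu : ‖u‖ = 1)
    (h : joukowsky w = joukowsky u) : ‖w‖ = 1 := by
  rcases eq_or_mul_eq_one_of_joukowsky_eq hw (norm_ne_zero_iff.1 (hu ▸ one_ne_zero)) h
    with rfl | hwu
  · exact hu
  · simpa [hu] using congrArg norm hwu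

theorem exists_joukowsky_eq (z : ℂ) : ∃ w ≠ 0, joukowsky w = z := by
  obtain ⟨s, hs⟩ := IsAlgClosed.exists_eq_mul_self (z ^ 2 - 1)
  have hprod : (z + s) * (z - s) = 1 := by linear_combination hs
  refine ⟨z + s, left_ne_zero_of_mul_eq_one hprod, ?_⟩
  rw [joukowsky, inv_eq_of_mul_eq_one_right hprod]
  ring

theorem joukowsky_exp_mul_I (θ : ℂ) : joukowsky (exp (θ * I)) = cos θ := by
  rw [joukowsky, ← exp_neg, cos, neg_mul]

theorem joukowsky_of_norm_eq_one {w : ℂ} (hw : ‖w‖ = 1) : joukowsky w = w.re := by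
  rw [joukowsky, inv_eq_conj hw, add_conj]
  push_cast
  ring

theorem joukowsky_mem_segment_of_norm_eq_one {w : ℂ} (hw : ‖w‖ = 1) :
    (joukowsky w).im = 0 ∧ -1 ≤ (joukowsky w).re ∧ (joukowsky w).re ≤ 1 := by
  have hre : |w.re| ≤ 1 := hw ▸ abs_re_le_norm w
  rw [joukowsky_of_norm_eq_one hw, ofReal_im, ofReal_re]
  exact ⟨rfl, abs_le.1 hre⟩

theorem exists_norm_eq_one_joukowsky_eq {z : ℂ} (hz : z.im = 0 ∧ -1 ≤ z.re ∧ z.re ≤ 1) :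
    ∃ u : ℂ, ‖u‖ = 1 ∧ joukowsky u = z := by
  refine ⟨exp (Real.arccos z.re * I), norm_exp_ofReal_mul_I _, ?_⟩
  rw [joukowsky_exp_mul_I, ← ofReal_cos, Real.cos_arccos hz.2.1 hz.2.2]
  exact Complex.ext rfl hz.1.symm

/-- The map `w ↦ (w + w⁻¹)/2` is a bijection from the punctured open unit disc
`{w : 0 < |w| < 1}` onto `ℂ \ [-1,1]`, where `[-1,1]` is the real segment in `ℂ`. -/
theorem stmt_0 :
    Set.BijOn (fun w : ℂ => (w + w⁻¹) / 2)
      {w : ℂ | 0 < ‖w‖ ∧ ‖w‖ < 1}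
      {z : ℂ | ¬(z.im = 0 ∧ -1 ≤ z.re ∧ z.re ≤ 1)} := by
  refine ⟨?mapsTo, ?injOn, ?surjOn⟩
  case mapsTo =>
    rintro w ⟨hw0, hw1⟩ hseg
    obtain ⟨u, hu, huw⟩ := exists_norm_eq_one_joukowsky_eq hseg
    exact hw1.ne (norm_eq_one_of_joukowsky_eq (norm_pos_iff.1 hw0) hu huw.symm)
  case injOn =>
    rintro w ⟨hw0, hw1⟩ v ⟨hv0, hv1⟩ h
    refine (eq_or_mul_eq_one_of_joukowsky_eq (norm_pos_iff.1 hw0) (norm_pos_iff.1 hv0)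
      h).resolve_right fun hwv => ?_
    have : ‖w‖ * ‖v‖ = 1 := by rw [← norm_mul, hwv, norm_one]
    nlinarith
  case surjOn =>
    intro z hz
    obtain ⟨w, hw0, rfl⟩ := exists_joukowsky_eq z
    rcases lt_trichotomy ‖w‖ 1 with h | h | h
    · exact ⟨w, ⟨norm_pos_iff.2 hw0, h⟩, rfl⟩
    · exact absurd (joukowsky_mem_segment_of_norm_eq_one h) hz
    · refine ⟨w⁻¹, ⟨by simpa using hw0, by simpa using inv_lt_one_of_one_lt₀ h⟩, joukowsky_inv w⟩
end

section
/- For every z ∈ ℂ \ [−1,1] (where [−1,1] is the real segment {x + 0i : −1 ≤ x ≤ 1}), the complex number w = z − (z+1)^{1/2}·(z−1)^{1/2} satisfies 0 < |w| < 1, (w + w⁻¹)/2 = z, and (w − w⁻¹)/2 = −(z+1)^{1/2}·(z−1)^{1/2}. In particular, w is the unique preimage of z in the punctured unit disc under the map w ↦ (w + w⁻¹)/2. -/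
/-!
Put `a = (z + 1)^{1/2}` and `b = (z - 1)^{1/2}`. Then `w = (a - b)² / 2` and
`w⁻¹ = z + ab = (a + b)² / 2`, so `‖w‖ < 1` amounts to `‖a - b‖ < ‖a + b‖`, i.e. to
`Re (a b̄) > 0`. The argument of `a b̄` is `(arg (z + 1) - arg (z - 1)) / 2`, and for `z ∉ [-1, 1]`
the points `z + 1` and `z - 1` lie on the same side of the branch cut, so
`|arg (z + 1) - arg (z - 1)| < π`. Uniqueness holds because `c w = c v` forces `w = v` or
`w v = 1`.
-/

open Complex ComplexConjugate
open scoped Real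

lemma cpow_one_half_sq (x : ℂ) : (x ^ (1 / 2 : ℂ)) ^ 2 = x := by
  rw [one_div]
  exact_mod_cast cpow_ofNat_inv_pow x 2

lemma norm_lt_one_of_norm_lt_norm_inv {𝕜 : Type*} [NormedDivisionRing 𝕜] {w : 𝕜}
    (h : ‖w‖ < ‖w⁻¹‖) : ‖w‖ < 1 := by
  rw [norm_inv] at h
  by_contra! h₁
  exact (inv_le_one_of_one_le₀ h₁).not_gt (h.trans_le' h₁)

lemma norm_sub_lt_norm_add_of_re_mul_conj_pos {a b : ℂ} (h : 0 < (a * conj b).re) :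
    ‖a - b‖ < ‖a + b‖ := by
  rw [← sq_lt_sq₀ (norm_nonneg _) (norm_nonneg _), ← normSq_eq_norm_sq, ← normSq_eq_norm_sq,
    normSq_sub, normSq_add]
  linarith

lemma re_cpow_half_mul_conj_cpow_half_pos {x y : ℂ} (hx : x ≠ 0) (hy : y ≠ 0)
    (h : |arg x - arg y| < π) : 0 < (x ^ (1 / 2 : ℂ) * conj (y ^ (1 / 2 : ℂ))).re := by
  rw [cpow_def_of_ne_zero hx, cpow_def_of_ne_zero hy, ← exp_conj, ← exp_add, exp_re]
  refine mul_pos (Real.exp_pos _) (Real.cos_pos_of_mem_Ioo ?_)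
  have him : (log x * (1 / 2) + conj (log y * (1 / 2))).im = (arg x - arg y) / 2 := by
    simp only [add_im, conj_im, mul_im, log_im, log_re]
    norm_num
    ring
  rw [him]
  constructor <;> linarith [abs_lt.mp h]

lemma abs_arg_add_one_sub_arg_sub_one_lt_pi {z : ℂ} (hz : ¬(z.im = 0 ∧ -1 ≤ z.re ∧ z.re ≤ 1)) :
    |arg (z + 1) - arg (z - 1)| < π := by
  rcases lt_trichotomy z.im 0 with him | him | him
  · have h₁ : arg (z + 1) < 0 := arg_neg_iff.mpr (by simpa using him)
    have h₂ : arg (z - 1) < 0 := arg_neg_iff.mpr (by simpa using him)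
    rw [abs_lt]
    constructor <;> linarith [neg_pi_lt_arg (z + 1), neg_pi_lt_arg (z - 1)]
  · have : z.re < -1 ∨ 1 < z.re := by
      by_contra! h
      exact hz ⟨him, h⟩
    rcases this with hre | hre
    · rw [arg_eq_pi_iff.mpr ⟨by simp only [add_re, one_re]; linarith, by simpa using him⟩,
        arg_eq_pi_iff.mpr ⟨by simp only [sub_re, one_re]; linarith, by simpa using him⟩]
      simpa using Real.pi_pos
    · rw [arg_eq_zero_iff.mpr ⟨by simp only [add_re, one_re]; linarith, by simpa using him⟩,
        arg_eq_zero_iff.mpr ⟨by simp only [sub_re, one_re]; linarith, by simpa using him⟩]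
      simpa using Real.pi_pos
  · have h₁ : arg (z + 1) < π := arg_lt_pi_iff.mpr (Or.inr (by simpa using him.ne'))
    have h₂ : arg (z - 1) < π := arg_lt_pi_iff.mpr (Or.inr (by simpa using him.ne'))
    rw [abs_lt]
    constructor <;> linarith [arg_nonneg_iff.mpr (by simpa using him.le : 0 ≤ (z + 1).im),
      arg_nonneg_iff.mpr (by simpa using him.le : 0 ≤ (z - 1).im)]

lemma injOn_joukowski :
    Set.InjOn (fun w : ℂ => (w + w⁻¹) / 2) {w | 0 < ‖w‖ ∧ ‖w‖ < 1} := by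
  rintro w ⟨hw₀, hw₁⟩ v ⟨hv₀, hv₁⟩ h
  have hw : w ≠ 0 := norm_pos_iff.mp hw₀
  have hv : v ≠ 0 := norm_pos_iff.mp hv₀
  have hprod : ‖w * v‖ < 1 := by
    rw [norm_mul]; nlinarith
  have hfac : (w - v) * (w * v - 1) = 0 := by
    field_simp at h
    linear_combination h
  rcases mul_eq_zero.mp hfac with h | h
  · exact sub_eq_zero.mp h
  · rw [sub_eq_zero.mp h, norm_one] at hprod
    exact (lt_irrefl 1 hprod).elim

/-- For `z ∈ ℂ \ [-1,1]`, the number `w = z - (z+1)^{1/2}·(z-1)^{1/2}` (principal square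
roots) lies in the punctured open unit disc, satisfies `(w + w⁻¹)/2 = z` and
`(w - w⁻¹)/2 = -(z+1)^{1/2}·(z-1)^{1/2}`, and is the unique preimage of `z` in the
punctured unit disc under `w ↦ (w + w⁻¹)/2`. -/
theorem stmt_3 (z : ℂ) (hz : ¬(z.im = 0 ∧ -1 ≤ z.re ∧ z.re ≤ 1)) :
    let w : ℂ := z - (z + 1) ^ ((1 : ℂ) / 2) * (z - 1) ^ ((1 : ℂ) / 2)
    (0 < ‖w‖ ∧ ‖w‖ < 1) ∧
      (w + w⁻¹) / 2 = z ∧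
      (w - w⁻¹) / 2 = -((z + 1) ^ ((1 : ℂ) / 2) * (z - 1) ^ ((1 : ℂ) / 2)) ∧
      ∀ w' : ℂ, 0 < ‖w'‖ → ‖w'‖ < 1 → (w' + w'⁻¹) / 2 = z → w' = w := by
  intro w
  set a := (z + 1) ^ ((1 : ℂ) / 2)
  set b := (z - 1) ^ ((1 : ℂ) / 2)
  have ha : a ^ 2 = z + 1 := cpow_one_half_sq _
  have hb : b ^ 2 = z - 1 := cpow_one_half_sq _
  have hw_sq : w = (a - b) ^ 2 / 2 := by linear_combination (-1 / 2 : ℂ) * ha - 1 / 2 * hb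
  have hw_mul : w * (z + a * b) = 1 := by linear_combination (-b ^ 2) * ha - (z + 1) * hb
  have hw₀ : w ≠ 0 := left_ne_zero_of_mul_eq_one hw_mul
  have hw_inv : w⁻¹ = z + a * b := inv_eq_of_mul_eq_one_right hw_mul
  have hw_inv_sq : w⁻¹ = (a + b) ^ 2 / 2 := by
    rw [hw_inv]; linear_combination (-1 / 2 : ℂ) * ha - 1 / 2 * hb
  have hz_add : z + 1 ≠ 0 := fun h ↦ hz (by rw [eq_neg_of_add_eq_zero_left h]; norm_num)
  have hz_sub : z - 1 ≠ 0 := fun h ↦ hz (by rw [sub_eq_zero.mp h]; norm_num)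
  have hab : ‖a - b‖ < ‖a + b‖ := norm_sub_lt_norm_add_of_re_mul_conj_pos
    (re_cpow_half_mul_conj_cpow_half_pos hz_add hz_sub (abs_arg_add_one_sub_arg_sub_one_lt_pi hz))
  have hw_lt : ‖w‖ < ‖w⁻¹‖ := by
    rw [hw_inv_sq, hw_sq, norm_div, norm_div, norm_pow, norm_pow]
    gcongr; norm_num
  have hw_disc : 0 < ‖w‖ ∧ ‖w‖ < 1 :=
    ⟨norm_pos_iff.mpr hw₀, norm_lt_one_of_norm_lt_norm_inv hw_lt⟩
  refine ⟨hw_disc, by rw [hw_inv]; ring, by rw [hw_inv]; ring, ?_⟩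
  intro w' hw'₀ hw'₁ hw'
  refine injOn_joukowski ⟨hw'₀, hw'₁⟩ hw_disc ?_
  simp only [hw', hw_inv]
  ring
end

section
/- The function g : ℂ → ℂ defined by g(z) = (z+1)^{1/2}·(z−1)^{1/2} (pointwise product of principal square roots) is complex differentiable at every point of ℂ \ [−1,1] (where [−1,1] is the real segment {x + 0i : −1 ≤ x ≤ 1}), and it satisfies g(−z) = −g(z) for every z ∈ ℂ \ [−1,1]. -/
open Complex Real

private lemma log_neg_of_arg (w : ℂ) {s : ℝ} (h : (-w).arg = w.arg + s) :
    Complex.log (-w) = Complex.log w + s * I := by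
  apply Complex.ext
  · simp [Complex.log_re, map_neg_eq_map]
  · simp [Complex.log_im, h]

private lemma cpow_half_neg (w : ℂ) (hw : w ≠ 0) {s : ℝ} (h : (-w).arg = w.arg + s) :
    (-w) ^ ((1 : ℂ) / 2) = Complex.exp ((s : ℂ) / 2 * I) * w ^ ((1 : ℂ) / 2) := by
  rw [cpow_def_of_ne_zero (neg_ne_zero.mpr hw), cpow_def_of_ne_zero hw,
    log_neg_of_arg w h, ← Complex.exp_add]
  congr 1
  ring

private lemma exp_neg_pi_half : Complex.exp (((-π : ℝ) : ℂ) / 2 * I) = -I := by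
  rw [show (((-π : ℝ) : ℂ) / 2 * I) = (↑(-(π / 2)) : ℂ) * I by push_cast; ring,
    Complex.exp_mul_I, ← Complex.ofReal_cos, ← Complex.ofReal_sin]
  simp

private lemma exp_pi_half : Complex.exp (((π : ℝ) : ℂ) / 2 * I) = I := by
  rw [show (((π : ℝ) : ℂ) / 2 * I) = (↑(π / 2) : ℂ) * I by push_cast; ring,
    Complex.exp_mul_I, ← Complex.ofReal_cos, ← Complex.ofReal_sin]
  simp

/-- key identity -/
private lemma key (z : ℂ) (hz : ¬(z.im = 0 ∧ -1 ≤ z.re ∧ z.re ≤ 1)) :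
    (-z + 1) ^ ((1 : ℂ) / 2) * (-z - 1) ^ ((1 : ℂ) / 2) =
      -((z + 1) ^ ((1 : ℂ) / 2) * (z - 1) ^ ((1 : ℂ) / 2)) := by
  have h1 : (-z + 1) = -(z - 1) := by ring
  have h2 : (-z - 1) = -(z + 1) := by ring
  rw [h1, h2]
  rcases lt_trichotomy z.im 0 with him | him | him
  · have ha : (z - 1).im < 0 := by simpa using him
    have hb : (z + 1).im < 0 := by simpa using him
    rw [cpow_half_neg _ (by intro h; rw [h] at ha; simp at ha)
        (arg_neg_eq_arg_add_pi_of_im_neg ha),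
      cpow_half_neg _ (by intro h; rw [h] at hb; simp at hb)
        (arg_neg_eq_arg_add_pi_of_im_neg hb), exp_pi_half]
    linear_combination ((z - 1) ^ ((1 : ℂ) / 2) * (z + 1) ^ ((1 : ℂ) / 2)) * Complex.I_sq
  · have hre : z.re < -1 ∨ 1 < z.re := by
      by_contra h
      push_neg at h
      exact hz ⟨him, h.1, h.2⟩
    have e1 : z - 1 = ((z.re - 1 : ℝ) : ℂ) := by apply Complex.ext <;> simp [him]
    have e2 : z + 1 = ((z.re + 1 : ℝ) : ℂ) := by apply Complex.ext <;> simp [him]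
    rcases hre with hre | hre
    · have ha' : (-(z - 1)).arg = (z - 1).arg + (-π) := by
        rw [e1, show -(((z.re - 1 : ℝ) : ℂ)) = ((-(z.re - 1) : ℝ) : ℂ) by push_cast; ring,
          Complex.arg_ofReal_of_nonneg (by linarith), Complex.arg_ofReal_of_neg (by linarith)]
        ring
      have hb' : (-(z + 1)).arg = (z + 1).arg + (-π) := by
        rw [e2, show -(((z.re + 1 : ℝ) : ℂ)) = ((-(z.re + 1) : ℝ) : ℂ) by push_cast; ring,
          Complex.arg_ofReal_of_nonneg (by linarith), Complex.arg_ofReal_of_neg (by linarith)]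
        ring
      rw [cpow_half_neg _ (by
          intro h
          have := congrArg Complex.re h
          simp only [Complex.sub_re, Complex.one_re, Complex.zero_re] at this
          linarith) ha',
        cpow_half_neg _ (by
          intro h
          have := congrArg Complex.re h
          simp only [Complex.add_re, Complex.one_re, Complex.zero_re] at this
          linarith) hb', exp_neg_pi_half]
      linear_combination ((z - 1) ^ ((1 : ℂ) / 2) * (z + 1) ^ ((1 : ℂ) / 2)) * Complex.I_sq
    · have ha' : (-(z - 1)).arg = (z - 1).arg + π := by
        rw [e1, show -(((z.re - 1 : ℝ) : ℂ)) = ((-(z.re - 1) : ℝ) : ℂ) by push_cast; ring,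
          Complex.arg_ofReal_of_neg (by linarith), Complex.arg_ofReal_of_nonneg (by linarith)]
        ring
      have hb' : (-(z + 1)).arg = (z + 1).arg + π := by
        rw [e2, show -(((z.re + 1 : ℝ) : ℂ)) = ((-(z.re + 1) : ℝ) : ℂ) by push_cast; ring,
          Complex.arg_ofReal_of_neg (by linarith), Complex.arg_ofReal_of_nonneg (by linarith)]
        ring
      rw [cpow_half_neg _ (by
          intro h
          have := congrArg Complex.re h
          simp only [Complex.sub_re, Complex.one_re, Complex.zero_re] at this
          linarith) ha',
        cpow_half_neg _ (by
          intro h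
          have := congrArg Complex.re h
          simp only [Complex.add_re, Complex.one_re, Complex.zero_re] at this
          linarith) hb', exp_pi_half]
      linear_combination ((z - 1) ^ ((1 : ℂ) / 2) * (z + 1) ^ ((1 : ℂ) / 2)) * Complex.I_sq
  · have ha : 0 < (z - 1).im := by simpa using him
    have hb : 0 < (z + 1).im := by simpa using him
    have ha' : (-(z - 1)).arg = (z - 1).arg + (-π) := by
      rw [arg_neg_eq_arg_sub_pi_of_im_pos ha]; ring
    have hb' : (-(z + 1)).arg = (z + 1).arg + (-π) := by
      rw [arg_neg_eq_arg_sub_pi_of_im_pos hb]; ring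
    rw [cpow_half_neg _ (by intro h; rw [h] at ha; simp at ha) ha',
      cpow_half_neg _ (by intro h; rw [h] at hb; simp at hb) hb', exp_neg_pi_half]
    linear_combination ((z - 1) ^ ((1 : ℂ) / 2) * (z + 1) ^ ((1 : ℂ) / 2)) * Complex.I_sq

private lemma diff_easy (z : ℂ) (h1 : z + 1 ∈ Complex.slitPlane) (h2 : z - 1 ∈ Complex.slitPlane) :
    DifferentiableAt ℂ (fun u : ℂ => (u + 1) ^ ((1 : ℂ) / 2) * (u - 1) ^ ((1 : ℂ) / 2)) z := by
  exact ((differentiableAt_id.add_const 1).cpow (differentiableAt_const _) h1).mul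
    ((differentiableAt_id.sub_const 1).cpow (differentiableAt_const _) h2)

/-- The function `g(z) = (z+1)^{1/2}·(z-1)^{1/2}` (principal square roots) is complex
differentiable at every point of `ℂ \ [-1,1]` and satisfies `g(-z) = -g(z)` there. -/
theorem stmt_4 (z : ℂ) (hz : ¬(z.im = 0 ∧ -1 ≤ z.re ∧ z.re ≤ 1)) :
    DifferentiableAt ℂ (fun u : ℂ => (u + 1) ^ ((1 : ℂ) / 2) * (u - 1) ^ ((1 : ℂ) / 2)) z ∧
    (-z + 1) ^ ((1 : ℂ) / 2) * (-z - 1) ^ ((1 : ℂ) / 2) =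
      -((z + 1) ^ ((1 : ℂ) / 2) * (z - 1) ^ ((1 : ℂ) / 2)) := by
  refine ⟨?_, key z hz⟩
  by_cases him : z.im = 0
  · have hre : z.re < -1 ∨ 1 < z.re := by
      by_contra h
      push_neg at h
      exact hz ⟨him, h.1, h.2⟩
    rcases hre with hre | hre
    · have hd : DifferentiableAt ℂ
          (fun u : ℂ => -(((-u) + 1) ^ ((1 : ℂ) / 2) * ((-u) - 1) ^ ((1 : ℂ) / 2))) z := by
        have := (diff_easy (-z)
          (Or.inl (by simp only [Complex.add_re, Complex.neg_re, Complex.one_re]; linarith))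
          (Or.inl (by simp only [Complex.sub_re, Complex.neg_re, Complex.one_re]; linarith))).comp
          z differentiable_neg.differentiableAt
        exact this.neg
      apply hd.congr_of_eventuallyEq
      have hopen : IsOpen {u : ℂ | u.re < -1} :=
        isOpen_lt Complex.continuous_re continuous_const
      filter_upwards [hopen.mem_nhds (by simpa using hre)] with u hu
      have hk := key u (by
        intro h
        have hu' : u.re < -1 := hu
        linarith [h.2.1])
      linear_combination hk
    · exact diff_easy z
        (Or.inl (by simp only [Complex.add_re, Complex.one_re]; linarith))
        (Or.inl (by simp only [Complex.sub_re, Complex.one_re]; linarith))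
  · exact diff_easy z (Or.inr (by simpa using him)) (Or.inr (by simpa using him))
end

section
/- Let ζ, ζ₀ ∈ ℂ with |ζ| = |ζ₀| = 1, and let A = {w ∈ ℂ : 0 < |w| < 1 and (w + w⁻¹)/2 ∈ ζ₀·ℝ}, where ζ₀·ℝ = {t·ζ₀ : t ∈ ℝ}. Then the sets ζ·A = {ζ·w : w ∈ A} and A have nonempty intersection if and only if ζ = 1 or ζ = −1. -/
/-!
If `w` and `ζ w` both have Joukowski image `c = (w + w⁻¹)/2` on the line `ζ₀ ℝ`, eliminating
`w⁻¹` and `w` in turn from the two equations gives `(ζ - ζ⁻¹) w = 2ζ₀ (s - t ζ̄)` and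
`(ζ - ζ⁻¹) w⁻¹ = -2ζ₀ (s - t ζ)`, whose right-hand sides have equal modulus. Unless `ζ = ±1`
this forces `|w| = 1`. Conversely `A` is symmetric under `w ↦ -w`, and nonempty because `c`
attains every value of modulus `> 1` on the punctured disc: the two roots of
`w² - 2cw + 1` have product `1` and cannot both lie on the unit circle.
-/

namespace Complex

theorem sub_inv_ne_zero {ζ : ℂ} (hζ : ζ ≠ 0) (h1 : ζ ≠ 1) (h2 : ζ ≠ -1) : ζ - ζ⁻¹ ≠ 0 := by
  intro h
  have hsq : ζ * ζ = 1 := by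
    rw [sub_eq_zero] at h
    nth_rewrite 1 [h]
    exact inv_mul_cancel₀ hζ
  rcases mul_self_eq_one_iff.mp hsq with h' | h' <;> contradiction

theorem norm_ofReal_sub_ofReal_mul_inv {ζ : ℂ} (hζ : ‖ζ‖ = 1) (s t : ℝ) :
    ‖(s : ℂ) - t * ζ⁻¹‖ = ‖(s : ℂ) - t * ζ‖ := by
  rw [inv_eq_conj hζ, ← norm_conj ((s : ℂ) - t * ζ)]
  simp only [map_sub, map_mul, conj_ofReal]

theorem norm_eq_one_of_half_add_inv_mem_line {ζ ζ₀ w : ℂ} {s t : ℝ} (hζ : ‖ζ‖ = 1)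
    (h1 : ζ ≠ 1) (h2 : ζ ≠ -1) (hw : w ≠ 0) (ht : (w + w⁻¹) / 2 = t * ζ₀)
    (hs : (ζ * w + (ζ * w)⁻¹) / 2 = s * ζ₀) : ‖w‖ = 1 := by
  have hζ0 : ζ ≠ 0 := norm_ne_zero_iff.mp (by simp [hζ])
  rw [mul_inv] at hs
  have hw_eq : (ζ - ζ⁻¹) * w = 2 * ζ₀ * ((s : ℂ) - t * ζ⁻¹) := by
    linear_combination 2 * hs - 2 * ζ⁻¹ * ht
  have hw_inv_eq : (ζ - ζ⁻¹) * w⁻¹ = -(2 * ζ₀ * ((s : ℂ) - t * ζ)) := by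
    linear_combination 2 * ζ * ht - 2 * hs
  have hnorm : ‖w‖ = ‖w⁻¹‖ := by
    refine mul_left_cancel₀ (norm_ne_zero_iff.mpr (sub_inv_ne_zero hζ0 h1 h2)) ?_
    rw [← norm_mul, ← norm_mul, hw_eq, hw_inv_eq, norm_neg, norm_mul, norm_mul _ (_ - _),
      norm_ofReal_sub_ofReal_mul_inv hζ]
  rw [norm_inv] at hnorm
  have hpos : 0 < ‖w‖ := norm_pos_iff.mpr hw
  field_simp at hnorm
  nlinarith

theorem exists_norm_lt_one_half_add_inv_eq {z : ℂ} (hz : 1 < ‖z‖) :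
    ∃ w : ℂ, w ≠ 0 ∧ ‖w‖ < 1 ∧ (w + w⁻¹) / 2 = z := by
  obtain ⟨r, hr⟩ := IsAlgClosed.exists_pow_nat_eq (z ^ 2 - 1) two_pos
  set a := z + r
  set b := z - r
  have hab : a * b = 1 := by linear_combination -hr
  have hsum : a + b = 2 * z := by ring
  have hb : b = a⁻¹ := eq_inv_of_mul_eq_one_right hab
  have ha0 : a ≠ 0 := left_ne_zero_of_mul_eq_one hab
  have hnorm : ‖a‖ * ‖b‖ = 1 := by rw [← norm_mul, hab, norm_one]
  -- `|a| = |b| = 1` would give `|a + b| ≤ 2 < 2|z|`.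
  have ha1 : ‖a‖ ≠ 1 := by
    intro ha1
    have := norm_add_le a b
    rw [hsum, norm_mul, ha1, show ‖b‖ = 1 by simpa [ha1] using hnorm] at this
    norm_num at this
    linarith
  rcases ha1.lt_or_gt with hlt | hgt
  · exact ⟨a, ha0, hlt, by rw [← hb, hsum]; ring⟩
  · refine ⟨b, right_ne_zero_of_mul_eq_one hab, by nlinarith [norm_nonneg b], ?_⟩
    rw [hb, inv_inv, add_comm, ← hb, hsum]
    ring

end Complex

open Complex

/-- Let `|ζ| = |ζ₀| = 1` and let `A` be the set of `w` in the punctured open unit disc with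
`(w + w⁻¹)/2 ∈ ζ₀·ℝ`. Then `ζ·A` meets `A` if and only if `ζ = ±1`. -/
theorem stmt_5 (ζ ζ₀ : ℂ) (hζ : ‖ζ‖ = 1) (hζ₀ : ‖ζ₀‖ = 1) :
    let A : Set ℂ := {w : ℂ | (0 < ‖w‖ ∧ ‖w‖ < 1) ∧
      ∃ t : ℝ, (w + w⁻¹) / 2 = (t : ℂ) * ζ₀}
    ((fun w => ζ * w) '' A ∩ A).Nonempty ↔ ζ = 1 ∨ ζ = -1 := by
  intro A
  constructor
  · rintro ⟨_, ⟨w, ⟨⟨hw0, hw1⟩, t, ht⟩, rfl⟩, -, s, hs⟩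
    by_contra! h
    have := norm_eq_one_of_half_add_inv_mem_line hζ h.1 h.2 (norm_pos_iff.mp hw0) ht hs
    linarith
  · have h2ζ₀ : 1 < ‖((2 : ℝ) : ℂ) * ζ₀‖ := by simp [hζ₀]
    obtain ⟨w, hw0, hw1, hw⟩ := exists_norm_lt_one_half_add_inv_eq h2ζ₀
    have hwA : w ∈ A := ⟨⟨norm_pos_iff.mpr hw0, hw1⟩, 2, hw⟩
    have hnegA : -w ∈ A := ⟨by simpa using hwA.1, -2, by
      rw [inv_neg]; push_cast at hw ⊢; linear_combination -hw⟩
    rintro (rfl | rfl)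
    · exact ⟨w, ⟨w, hwA, one_mul w⟩, hwA⟩
    · exact ⟨-w, ⟨w, hwA, neg_one_mul w⟩, hnegA⟩
end

section
/- For every z ∈ ℂ with z ≠ 0, there is no w ∈ ℂ with 0 < |w| < 1 such that both z·c(w) and z·c(−iw) are purely imaginary (i.e. have zero real part), where c(u) = (u + u⁻¹)/2. -/
/-! If `a := z·c(w)` is purely imaginary and `b := z·s(w)` is real, then `a ⟂ b`, so
`‖a + b‖ = ‖a - b‖`. Since `a + b = z·w` and `a - b = z·w⁻¹`, this forces `‖w‖ = ‖w‖⁻¹`,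
i.e. `w` lies on the unit circle. The second hypothesis says exactly that `b` is real,
because `c(-iw) = -i·s(w)`. -/

open Complex

namespace Complex

theorem norm_add_eq_norm_sub_of_re_eq_zero_of_im_eq_zero {a b : ℂ} (ha : a.re = 0)
    (hb : b.im = 0) : ‖a + b‖ = ‖a - b‖ := by
  have : normSq (a + b) = normSq (a - b) := by
    simp only [normSq_apply, add_re, add_im, sub_re, sub_im, ha, hb]
    ring
  rw [norm_def, norm_def, this]

theorem neg_I_mul_add_inv (w : ℂ) : -I * w + (-I * w)⁻¹ = -I * (w - w⁻¹) := by
  rw [mul_inv, inv_neg, inv_I, neg_neg]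
  ring

theorem norm_eq_one_of_re_mul_add_inv_eq_zero_of_im_mul_sub_inv_eq_zero {z w : ℂ} (hz : z ≠ 0)
    (hw : w ≠ 0) (hc : (z * ((w + w⁻¹) / 2)).re = 0) (hs : (z * ((w - w⁻¹) / 2)).im = 0) :
    ‖w‖ = 1 := by
  have hperp := norm_add_eq_norm_sub_of_re_eq_zero_of_im_eq_zero hc hs
  rw [show z * ((w + w⁻¹) / 2) + z * ((w - w⁻¹) / 2) = z * w by ring,
    show z * ((w + w⁻¹) / 2) - z * ((w - w⁻¹) / 2) = z * w⁻¹ by ring,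
    norm_mul, norm_mul, norm_inv] at hperp
  have hself : ‖w‖ = ‖w‖⁻¹ := mul_left_cancel₀ (norm_ne_zero_iff.mpr hz) hperp
  have hsq : ‖w‖ * ‖w‖ = 1 := by
    rw [mul_eq_one_iff_eq_inv₀ (norm_ne_zero_iff.mpr hw), ← hself]
  nlinarith [norm_nonneg w]

end Complex

/-- For `z ≠ 0` there is no `w` in the punctured open unit disc such that both
`z·c(w)` and `z·c(-iw)` are purely imaginary, where `c(u) = (u + u⁻¹)/2`. -/
theorem stmt_6 (z : ℂ) (hz : z ≠ 0) :
    ¬∃ w : ℂ, (0 < ‖w‖ ∧ ‖w‖ < 1) ∧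
      (z * ((w + w⁻¹) / 2)).re = 0 ∧
      (z * ((-Complex.I * w + (-Complex.I * w)⁻¹) / 2)).re = 0 := by
  rintro ⟨w, ⟨hw_pos, hw_lt⟩, hc, hc'⟩
  have hs : (z * ((w - w⁻¹) / 2)).im = 0 := by
    rw [neg_I_mul_add_inv, mul_div_assoc, mul_left_comm] at hc'
    simpa using hc'
  have hw : w ≠ 0 := norm_pos_iff.mp hw_pos
  exact hw_lt.ne (norm_eq_one_of_re_mul_add_inv_eq_zero_of_im_mul_sub_inv_eq_zero hz hw hc hs)
end

section
/- Let m be an even positive integer and set ρ = m/2. Define c(λ) = 2^{−2λ}·Γ(2λ) / (Γ(λ + 1/2)·Γ(λ + ρ)) for complex λ, and define the polynomial P(x) = ∏_{k=0}^{2ρ−2} (x − (ρ−1) + k). Then there exists a nonzero constant c₀ ∈ ℂ such that for every real x ≠ 0, 1/(c(ix)·c(−ix)) = c₀ · x · P(ix). -/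
open Complex Finset

private lemma aux_gamma_ne (lam : ℂ) (h : lam.im ≠ 0) : Complex.Gamma lam ≠ 0 := by
  refine Complex.Gamma_ne_zero fun k hk => h ?_
  rw [hk]; simp

private lemma aux_gamma_shift (lam : ℂ) (h : lam.im ≠ 0) (n : ℕ) :
    Complex.Gamma (lam + n) = Complex.Gamma lam * ∏ k ∈ Finset.range n, (lam + k) := by
  induction n with
  | zero => simp
  | succ n ih =>
      have h1 : lam + ((n + 1 : ℕ) : ℂ) = (lam + n) + 1 := by push_cast; ring
      have h2 : lam + (n : ℂ) ≠ 0 := by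
        intro h0
        apply h
        have := congrArg Complex.im h0
        simpa using this
      rw [h1, Complex.Gamma_add_one _ h2, ih, Finset.prod_range_succ]
      ring

private lemma aux_prod_ne (lam : ℂ) (h : lam.im ≠ 0) (n : ℕ) :
    (∏ k ∈ Finset.range n, (lam + k)) ≠ 0 := by
  refine Finset.prod_ne_zero_iff.mpr fun k _ h0 => h ?_
  have := congrArg Complex.im h0
  simpa using this

private lemma aux_cformula (n : ℕ) (lam : ℂ) (h : lam.im ≠ 0) :
    (2 : ℂ) ^ (-(2 * lam)) * Complex.Gamma (2 * lam) /
        (Complex.Gamma (lam + 1 / 2) * Complex.Gamma (lam + (n : ℂ)))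
      = 1 / (2 * (Real.sqrt Real.pi : ℂ) * ∏ k ∈ Finset.range n, (lam + k)) := by
  have hdup := Complex.Gamma_mul_Gamma_add_half lam
  have h2 : (2 : ℂ) ^ ((1 : ℂ) - 2 * lam) = 2 * (2 : ℂ) ^ (-(2 * lam)) := by
    rw [sub_eq_add_neg, Complex.cpow_add _ _ (by norm_num), Complex.cpow_one]
  rw [h2] at hdup
  have hG : Complex.Gamma lam ≠ 0 := aux_gamma_ne lam h
  have hGh : Complex.Gamma (lam + 1 / 2) ≠ 0 := by
    refine aux_gamma_ne _ ?_
    simpa using h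
  have hprod := aux_prod_ne lam h n
  have hsq : (Real.sqrt Real.pi : ℂ) ≠ 0 := by
    simp [Real.sqrt_eq_zero', Real.pi_pos.le, Real.pi_ne_zero, Real.pi_pos.not_gt]
  rw [aux_gamma_shift lam h n]
  rw [div_eq_div_iff (by exact mul_ne_zero hGh (mul_ne_zero hG hprod))
    (by exact mul_ne_zero (mul_ne_zero (by norm_num) hsq) hprod)]
  linear_combination (-(∏ k ∈ Finset.range n, (lam + (k:ℂ)))) * hdup

private lemma aux_prodid (p : ℕ) (lam : ℂ) :
    (∏ k ∈ Finset.range (p + 1), (lam + k)) * (∏ k ∈ Finset.range (p + 1), (-lam + k))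
      = (-1) ^ (p + 1) * lam * ∏ k ∈ Finset.range (p + (p + 1)), (lam - p + k) := by
  have h1 : ∏ k ∈ Finset.range (p + (p + 1)), (lam - p + k)
      = (∏ k ∈ Finset.range p, (lam - p + k)) * ∏ k ∈ Finset.range (p + 1), (lam + k) := by
    rw [Finset.prod_range_add]
    congr 1
    refine Finset.prod_congr rfl fun k _ => ?_
    push_cast; ring
  have h2 : ∏ k ∈ Finset.range (p + 1), (-lam + k)
      = (-1) ^ (p + 1) * ∏ k ∈ Finset.range (p + 1), (lam - k) := by
    have e : ∀ k : ℕ, -lam + (k : ℂ) = (-1) * (lam - k) := fun k => by ring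
    simp_rw [e]
    rw [Finset.prod_mul_distrib, Finset.prod_const, Finset.card_range]
  have h3 : ∏ k ∈ Finset.range (p + 1), (lam - k)
      = (∏ k ∈ Finset.range p, (lam - (k + 1))) * lam := by
    rw [Finset.prod_range_succ']
    simp
  have h4 : ∏ k ∈ Finset.range p, (lam - p + k) = ∏ k ∈ Finset.range p, (lam - (k + 1)) := by
    rw [← Finset.prod_range_reflect (fun j => lam - ((j : ℂ) + 1)) p]
    refine Finset.prod_congr rfl fun j hj => ?_
    have hj' : j < p := Finset.mem_range.mp hj
    have : ((p - 1 - j : ℕ) : ℂ) + 1 = (p : ℂ) - j := by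
      have e : p - 1 - j = p - (j + 1) := by omega
      rw [e, Nat.cast_sub (by omega : j + 1 ≤ p)]
      push_cast; ring
    rw [this]
    ring
  rw [h1, h2, h3, h4]
  ring

/-- Rank one Plancherel density, even multiplicity case. Let `m` be even positive and
`ρ = m/2`. With `c(λ) = 2^{-2λ}Γ(2λ)/(Γ(λ+1/2)Γ(λ+ρ))` and
`P(x) = ∏_{k=0}^{2ρ-2} (x - (ρ-1) + k)`, there is a nonzero constant `c₀` with
`1/(c(ix)c(-ix)) = c₀·x·P(ix)` for all real `x ≠ 0`. -/
theorem stmt_8 (m : ℕ) (hmeven : Even m) (hmpos : 0 < m) :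
    let ρ : ℝ := (m : ℝ) / 2
    let c : ℂ → ℂ := fun lam =>
      (2 : ℂ) ^ (-(2 * lam)) * Complex.Gamma (2 * lam) /
        (Complex.Gamma (lam + 1 / 2) * Complex.Gamma (lam + (ρ : ℂ)))
    let P : ℂ → ℂ := fun X =>
      ∏ k ∈ Finset.range (m - 1), (X - ((ρ : ℂ) - 1) + (k : ℂ))
    ∃ c₀ : ℂ, c₀ ≠ 0 ∧ ∀ x : ℝ, x ≠ 0 →
      1 / (c (Complex.I * (x : ℂ)) * c (-(Complex.I * (x : ℂ)))) =
        c₀ * (x : ℂ) * P (Complex.I * (x : ℂ)) := by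
  intro ρ c P
  obtain ⟨n, hn⟩ := hmeven
  have hn1 : 1 ≤ n := by omega
  obtain ⟨p, rfl⟩ : ∃ p, n = p + 1 := ⟨n - 1, by omega⟩
  have hm : m = 2 * (p + 1) := by omega
  have hρ : (ρ : ℂ) = ((p + 1 : ℕ) : ℂ) := by
    simp only [ρ, hm]
    push_cast
    ring
  have hm1 : m - 1 = p + (p + 1) := by omega
  refine ⟨4 * Real.pi * (-1) ^ (p + 1) * Complex.I, ?_, ?_⟩
  · simp [Real.pi_ne_zero, Complex.I_ne_zero, Complex.ofReal_ne_zero]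
  · intro x hx
    set lam : ℂ := Complex.I * (x : ℂ) with hlam
    have him : lam.im = x := by simp [hlam]
    have him1 : lam.im ≠ 0 := by rw [him]; exact hx
    have him2 : (-lam).im ≠ 0 := by simpa using him1
    have hc1 : c lam = 1 / (2 * (Real.sqrt Real.pi : ℂ) *
        ∏ k ∈ Finset.range (p + 1), (lam + k)) := by
      simp only [c, hρ]
      exact aux_cformula (p + 1) lam him1
    have hc2 : c (-lam) = 1 / (2 * (Real.sqrt Real.pi : ℂ) *
        ∏ k ∈ Finset.range (p + 1), (-lam + k)) := by
      simp only [c, hρ]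
      exact aux_cformula (p + 1) (-lam) him2
    have hA := aux_prod_ne lam him1 (p + 1)
    have hB := aux_prod_ne (-lam) him2 (p + 1)
    have hsq : (Real.sqrt Real.pi : ℂ) ≠ 0 := by
      simp [Real.sqrt_eq_zero', Real.pi_pos.le, Real.pi_ne_zero, Real.pi_pos.not_gt]
    have hsq2 : (Real.sqrt Real.pi : ℂ) * (Real.sqrt Real.pi : ℂ) = (Real.pi : ℂ) := by
      rw [← Complex.ofReal_mul, Real.mul_self_sqrt Real.pi_pos.le]
    have hP : P lam = ∏ k ∈ Finset.range (p + (p + 1)), (lam - p + k) := by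
      simp only [P, hm1, hρ]
      refine Finset.prod_congr rfl fun k _ => ?_
      push_cast; ring
    rw [hc1, hc2, hP, div_mul_div_comm, one_mul, one_div_one_div]
    have hid := aux_prodid p lam
    have : (2 * (Real.sqrt Real.pi : ℂ) * ∏ k ∈ Finset.range (p + 1), (lam + k)) *
        (2 * (Real.sqrt Real.pi : ℂ) * ∏ k ∈ Finset.range (p + 1), (-lam + k))
        = 4 * (Real.pi : ℂ) * ((∏ k ∈ Finset.range (p + 1), (lam + k)) *
          ∏ k ∈ Finset.range (p + 1), (-lam + k)) := by
      rw [← hsq2]; ring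
    rw [this, hid, hlam]
    ring
end
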